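/- Let m, ω : ℝ → ℝ³ be twice and once differentiable respectively, with ‖m(t)‖ = 1, ⟨ω(t), m(t)⟩ = 0, ω(t) ≠ 0, and m'(t) = ω(t) × m(t) for all t. Then ‖m'(t)‖ = ‖ω(t)‖ and the geodesic curvature satisfies ⟨m''(t), m(t) × m'(t)⟩ / ‖m'(t)‖³ = −⟨ω'(t), ω(t) × m(t)⟩ / ‖ω(t)‖³. -/

import Mathlib

/-!
Because `ω ⊥ m` and `‖m‖ = 1`, Lagrange's identity gives `‖m'‖ = ‖ω × m‖ = ‖ω‖`, and the vector
triple product expansion gives `m × m' = m × (ω × m) = ω`. So the numerator is `⟨m'', ω⟩`, and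
differentiating `⟨m', ω⟩ = ⟨ω × m, ω⟩ ≡ 0` turns it into `-⟨m', ω'⟩ = -⟨ω', ω × m⟩`.
-/

open scoped RealInnerProductSpace

noncomputable section

def cross (a b : EuclideanSpace ℝ (Fin 3)) : EuclideanSpace ℝ (Fin 3) :=
  WithLp.toLp 2 ![a 1 * b 2 - a 2 * b 1, a 2 * b 0 - a 0 * b 2, a 0 * b 1 - a 1 * b 0]

open WithLp Matrix

theorem real_inner_eq_dotProduct {ι : Type*} [Fintype ι] (x y : EuclideanSpace ℝ ι) :
    ⟪x, y⟫ = ofLp x ⬝ᵥ ofLp y := by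
  rw [EuclideanSpace.inner_eq_star_dotProduct, star_trivial, dotProduct_comm]

theorem cross_eq_toLp_crossProduct (a b : EuclideanSpace ℝ (Fin 3)) :
    cross a b = toLp 2 (ofLp a ⨯₃ ofLp b) := by
  rw [cross_apply]; rfl

theorem real_inner_cross_self_left (a b : EuclideanSpace ℝ (Fin 3)) : ⟪cross a b, a⟫ = 0 := by
  rw [real_inner_comm, real_inner_eq_dotProduct, cross_eq_toLp_crossProduct, ofLp_toLp,
    dot_self_cross]

theorem cross_cross_eq_inner_smul_sub_inner_smul (a b c : EuclideanSpace ℝ (Fin 3)) :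
    cross a (cross b c) = ⟪a, c⟫ • b - ⟪a, b⟫ • c := by
  simp only [cross_eq_toLp_crossProduct, real_inner_eq_dotProduct,
    cross_cross_eq_smul_sub_smul', dotProduct_comm (ofLp b)]
  rfl

theorem norm_cross_sq (a b : EuclideanSpace ℝ (Fin 3)) :
    ‖cross a b‖ ^ 2 = ‖a‖ ^ 2 * ‖b‖ ^ 2 - ⟪a, b⟫ ^ 2 := by
  simp only [← real_inner_self_eq_norm_sq, real_inner_eq_dotProduct, cross_eq_toLp_crossProduct,
    cross_dot_cross, dotProduct_comm (ofLp b) (ofLp a)]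
  ring

theorem norm_cross_of_inner_eq_zero {a b : EuclideanSpace ℝ (Fin 3)} (h : ⟪a, b⟫ = 0) :
    ‖cross a b‖ = ‖a‖ * ‖b‖ := by
  rw [← sq_eq_sq₀ (norm_nonneg _) (by positivity), norm_cross_sq, h]
  ring

theorem cross_cross_self_of_inner_eq_zero {a b : EuclideanSpace ℝ (Fin 3)} (h : ⟪a, b⟫ = 0)
    (hb : ‖b‖ = 1) : cross b (cross a b) = a := by
  rw [cross_cross_eq_inner_smul_sub_inner_smul, real_inner_self_eq_norm_sq, hb, real_inner_comm, h]
  simp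

theorem HasDerivAt.inner_eq_neg_of_inner_eq_zero {E : Type*} [NormedAddCommGroup E]
    [InnerProductSpace ℝ E] {f g : ℝ → E} {f' g' : E} {t : ℝ} (hf : HasDerivAt f f' t)
    (hg : HasDerivAt g g' t) (h : ∀ᶠ s in nhds t, ⟪f s, g s⟫ = 0) :
    ⟪f', g t⟫ = -⟪f t, g'⟫ := by
  have h0 : HasDerivAt (fun s => ⟪f s, g s⟫) 0 t := (hasDerivAt_const t 0).congr_of_eventuallyEq h
  linarith [(hf.inner ℝ hg).unique h0]

theorem geodesic_curvature_from_angular_velocity_general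
    (m m' m'' ω ω' : ℝ → EuclideanSpace ℝ (Fin 3))
    (hm'' : ∀ t : ℝ, HasDerivAt m' (m'' t) t)
    (hω' : ∀ t : ℝ, HasDerivAt ω (ω' t) t)
    (hunit : ∀ t : ℝ, ‖m t‖ = 1)
    (horth : ∀ t : ℝ, ⟪ω t, m t⟫ = 0)
    (hode : ∀ t : ℝ, m' t = cross (ω t) (m t)) :
    ∀ t : ℝ, ‖m' t‖ = ‖ω t‖ ∧
      ⟪m'' t, cross (m t) (m' t)⟫ / ‖m' t‖ ^ 3 =
        -⟪ω' t, cross (ω t) (m t)⟫ / ‖ω t‖ ^ 3 := by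
  intro t
  have hnorm : ‖m' t‖ = ‖ω t‖ := by
    rw [hode, norm_cross_of_inner_eq_zero (horth t), hunit, mul_one]
  have hbinormal : cross (m t) (m' t) = ω t := by
    rw [hode, cross_cross_self_of_inner_eq_zero (horth t) (hunit t)]
  have hm'_perp : ∀ s, ⟪m' s, ω s⟫ = 0 := fun s => by
    rw [hode, real_inner_cross_self_left]
  have hnumerator : ⟪m'' t, ω t⟫ = -⟪m' t, ω' t⟫ :=
    (hm'' t).inner_eq_neg_of_inner_eq_zero (hω' t) (.of_forall hm'_perp)
  refine ⟨hnorm, ?_⟩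
  rw [hbinormal, hnorm, hnumerator, hode, real_inner_comm]

/-- For a twice differentiable curve `m` on the unit sphere with `m' = ω × m`, where
`ω ⊥ m` and `ω ≠ 0`, one has `‖m'‖ = ‖ω‖` and the geodesic curvature identity
`⟨m'', m × m'⟩ / ‖m'‖³ = −⟨ω', ω × m⟩ / ‖ω‖³`. -/
theorem geodesic_curvature_from_angular_velocity
    (m m' m'' ω ω' : ℝ → EuclideanSpace ℝ (Fin 3))
    (hm' : ∀ t : ℝ, HasDerivAt m (m' t) t)
    (hm'' : ∀ t : ℝ, HasDerivAt m' (m'' t) t)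
    (hω' : ∀ t : ℝ, HasDerivAt ω (ω' t) t)
    (hunit : ∀ t : ℝ, ‖m t‖ = 1)
    (horth : ∀ t : ℝ, ⟪ω t, m t⟫ = 0)
    (hne : ∀ t : ℝ, ω t ≠ 0)
    (hode : ∀ t : ℝ, m' t = cross (ω t) (m t)) :
    ∀ t : ℝ, ‖m' t‖ = ‖ω t‖ ∧
      ⟪m'' t, cross (m t) (m' t)⟫ / ‖m' t‖ ^ 3 =
        -⟪ω' t, cross (ω t) (m t)⟫ / ‖ω t‖ ^ 3 :=
  geodesic_curvature_from_angular_velocity_general m m' m'' ω ω' hm'' hω' hunit horth hode
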